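/- Let δ = (α+β+1-γ)/2 with Re(δ) < 1 and γ, δ ∉ ℤ, α/2, β/2 not nonpositive integers. Then 2·c⁺₁₂ = lim_{n→∞} Γ(2n+1)Γ(δ-1)/Γ(2n-1+δ) · (α/2)_n(β/2)_n/(n!((γ+1)/2)_n) where c⁺₁₂ = 2^(1-δ)Γ(δ-1)Γ((γ+1)/2)/(Γ(α/2)Γ(β/2)); i.e., the stated limit equals 2^(2-δ)Γ(δ-1)Γ((γ+1)/2)/(Γ(α/2)Γ(β/2)). -/

import Mathlib

/-!
Gauss's limit formula `n! n^(s-1) / (s)_n → Γ(s)` holds for every complex `s`. The Gamma quotient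
equals `(2n)! / (δ-1)_(2n)`, and the second factor splits as
`((α/2)_n / n!) ((β/2)_n / n!) (n! / ((γ+1)/2)_n)`; each of the four factors is a Gauss quotient
times a power of `n`. Since `α/2 + β/2 = (γ+1)/2 + (δ-1)`, these powers cancel, and only the
`2^(2-δ)` coming from `(2n)^(2-δ)` survives.
-/

open Complex Filter Finset Nat
open scoped Topology

theorem ascPochhammer_eval_eq_prod_range {R : Type*} [CommSemiring R] (n : ℕ) (r : R) :
    (ascPochhammer R n).eval r = ∏ j ∈ range n, (r + j) := by
  induction n with
  | zero => simp
  | succ n ih => simp [ascPochhammer_succ_right, ih, prod_range_succ]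

namespace Complex

theorem Gamma_nat_add_one_mul_Gamma_div_Gamma_add_nat {z : ℂ} (hz : ∀ k : ℕ, z ≠ -k) (m : ℕ) :
    Gamma (m + 1) * Gamma z / Gamma (z + m) = m ! / ∏ k ∈ range m, (z + k) := by
  rw [Gamma_nat_eq_factorial, ← ascPochhammer_eval_eq_prod_range,
    ← Gamma_add_nat_div_Gamma_eq z hz, div_div_eq_mul_div]

noncomputable def gaussSeq (s : ℂ) (n : ℕ) : ℂ :=
  n ! * (n : ℂ) ^ (s - 1) / ∏ k ∈ range n, (s + k)

theorem gaussSeq_eq_GammaSeq_mul {s : ℂ} {n : ℕ} (hn : n ≠ 0) (hsn : s + n ≠ 0) :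
    gaussSeq s n = GammaSeq s n * (1 + s * (n : ℂ)⁻¹) := by
  have hn' : (n : ℂ) ≠ 0 := Nat.cast_ne_zero.mpr hn
  rw [gaussSeq, GammaSeq, prod_range_succ, cpow_sub _ _ hn', cpow_one]
  field_simp
  ring

theorem tendsto_gaussSeq (s : ℂ) : Tendsto (gaussSeq s) atTop (𝓝 (Gamma s)) := by
  have hlim : Tendsto (fun n : ℕ => GammaSeq s n * (1 + s * (n : ℂ)⁻¹)) atTop
      (𝓝 (Gamma s * (1 + s * 0))) :=
    (GammaSeq_tendsto_Gamma s).mul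
      (tendsto_const_nhds.add (tendsto_inv_atTop_nhds_zero_nat.const_mul s))
  rw [mul_zero, add_zero, mul_one] at hlim
  refine hlim.congr' ?_
  filter_upwards [tendsto_natCast_atTop_atTop.eventually_gt_atTop (-s.re),
    eventually_ne_atTop 0] with n hsn hn
  refine (gaussSeq_eq_GammaSeq_mul hn fun h => ?_).symm
  have := congrArg re h
  simp only [add_re, natCast_re, zero_re] at this
  linarith

theorem factorial_div_prod_eq_gaussSeq_mul (s : ℂ) {n : ℕ} (hn : n ≠ 0) :
    n ! / ∏ k ∈ range n, (s + k) = gaussSeq s n * (n : ℂ) ^ (1 - s) := by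
  have hn' : (n : ℂ) ≠ 0 := Nat.cast_ne_zero.mpr hn
  rw [gaussSeq, mul_div_right_comm, mul_assoc, ← cpow_add _ _ hn', sub_add_sub_cancel',
    sub_self, cpow_zero, mul_one]

theorem prod_div_factorial_eq_inv_gaussSeq_mul (s : ℂ) {n : ℕ} (hn : n ≠ 0) :
    (∏ k ∈ range n, (s + k)) / n ! = (gaussSeq s n)⁻¹ * (n : ℂ) ^ (s - 1) := by
  rw [← inv_div, factorial_div_prod_eq_gaussSeq_mul s hn, mul_inv, ← cpow_neg, neg_sub]

theorem factorial_two_mul_div_prod_mul_prod_div_prod_eq {a b c d : ℂ} (habcd : a + b = c + d)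
    {n : ℕ} (hn : n ≠ 0) :
    ((2 * n) ! : ℂ) / (∏ k ∈ range (2 * n), (d + k)) *
        ((∏ k ∈ range n, (a + k)) * (∏ k ∈ range n, (b + k)) /
          ((n ! : ℂ) * ∏ k ∈ range n, (c + k))) =
      gaussSeq d (2 * n) * gaussSeq c n / (gaussSeq a n * gaussSeq b n) * 2 ^ (1 - d) := by
  have hn' : (n : ℂ) ≠ 0 := Nat.cast_ne_zero.mpr hn
  have hfac : (n ! : ℂ) ≠ 0 := Nat.cast_ne_zero.mpr n.factorial_ne_zero
  have hsplit : (∏ k ∈ range n, (a + k)) * (∏ k ∈ range n, (b + k)) /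
        ((n ! : ℂ) * ∏ k ∈ range n, (c + k)) =
      (∏ k ∈ range n, (a + k)) / n ! * ((∏ k ∈ range n, (b + k)) / n !) *
        (n ! / ∏ k ∈ range n, (c + k)) := by
    field_simp
  have hpow :
      (n : ℂ) ^ (1 - d) * (n : ℂ) ^ (a - 1) * (n : ℂ) ^ (b - 1) * (n : ℂ) ^ (1 - c) = 1 := by
    rw [← cpow_add _ _ hn', ← cpow_add _ _ hn', ← cpow_add _ _ hn',
      show 1 - d + (a - 1) + (b - 1) + (1 - c) = 0 by linear_combination habcd, cpow_zero]
  rw [hsplit, factorial_div_prod_eq_gaussSeq_mul d (by omega),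
    prod_div_factorial_eq_inv_gaussSeq_mul a hn, prod_div_factorial_eq_inv_gaussSeq_mul b hn,
    factorial_div_prod_eq_gaussSeq_mul c hn, Nat.cast_mul, natCast_mul_natCast_cpow, Nat.cast_ofNat]
  linear_combination
    (gaussSeq d (2 * n) * 2 ^ (1 - d) * gaussSeq c n / (gaussSeq a n * gaussSeq b n)) * hpow

theorem tendsto_factorial_two_mul_div_prod_mul_prod_div_prod {a b c d : ℂ}
    (habcd : a + b = c + d) (ha : ∀ m : ℕ, a ≠ -m) (hb : ∀ m : ℕ, b ≠ -m) :
    Tendsto (fun n : ℕ => ((2 * n) ! : ℂ) / (∏ k ∈ range (2 * n), (d + k)) *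
        ((∏ k ∈ range n, (a + k)) * (∏ k ∈ range n, (b + k)) /
          ((n ! : ℂ) * ∏ k ∈ range n, (c + k))))
      atTop (𝓝 (Gamma d * Gamma c / (Gamma a * Gamma b) * 2 ^ (1 - d))) := by
  have hdouble : Tendsto (fun n : ℕ => gaussSeq d (2 * n)) atTop (𝓝 (Gamma d)) :=
    (tendsto_gaussSeq d).comp (tendsto_id.const_mul_atTop' two_pos)
  have hlim := (((hdouble.mul (tendsto_gaussSeq c)).div
    ((tendsto_gaussSeq a).mul (tendsto_gaussSeq b))
    (mul_ne_zero (Gamma_ne_zero ha) (Gamma_ne_zero hb))).mul_const (2 ^ (1 - d) : ℂ))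
  refine hlim.congr' ?_
  filter_upwards [eventually_ne_atTop 0] with n hn
  exact (factorial_two_mul_div_prod_mul_prod_div_prod_eq habcd hn).symm

end Complex

theorem stmt19_general (α β γ δ : ℂ) (hδ : δ = (α + β + 1 - γ) / 2)
    (hδZ : ¬ ∃ m : ℤ, δ = (m : ℂ))
    (hα : ∀ m : ℕ, α / 2 ≠ -(m : ℂ)) (hβ : ∀ m : ℕ, β / 2 ≠ -(m : ℂ)) :
    Tendsto (fun n : ℕ =>
        Complex.Gamma (2 * (n : ℂ) + 1) * Complex.Gamma (δ - 1) /
            Complex.Gamma (2 * (n : ℂ) - 1 + δ) *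
          ((∏ i ∈ Finset.range n, (α / 2 + (i : ℂ))) *
              (∏ i ∈ Finset.range n, (β / 2 + (i : ℂ))) /
            ((n ! : ℂ) * ∏ i ∈ Finset.range n, ((γ + 1) / 2 + (i : ℂ)))))
      atTop
      (nhds (2 * ((2 : ℂ) ^ ((1 : ℂ) - δ) * Complex.Gamma (δ - 1) *
        Complex.Gamma ((γ + 1) / 2) / (Complex.Gamma (α / 2) * Complex.Gamma (β / 2))))) := by
  have hd : ∀ k : ℕ, δ - 1 ≠ -k := fun k h => hδZ ⟨1 - k, by push_cast; linear_combination h⟩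
  have hGamma (n : ℕ) : Gamma (2 * (n : ℂ) + 1) * Gamma (δ - 1) / Gamma (2 * (n : ℂ) - 1 + δ) =
      ((2 * n) ! : ℂ) / ∏ k ∈ range (2 * n), (δ - 1 + k) := by
    rw [← Gamma_nat_add_one_mul_Gamma_div_Gamma_add_nat hd, sub_add_comm]
    push_cast
    rfl
  have hlimit : 2 * ((2 : ℂ) ^ ((1 : ℂ) - δ) * Gamma (δ - 1) * Gamma ((γ + 1) / 2) /
      (Gamma (α / 2) * Gamma (β / 2))) = Gamma (δ - 1) * Gamma ((γ + 1) / 2) /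
      (Gamma (α / 2) * Gamma (β / 2)) * 2 ^ (1 - (δ - 1)) := by
    rw [show 1 - (δ - 1) = (1 - δ) + 1 by ring, cpow_add _ _ two_ne_zero, cpow_one]
    ring
  simp_rw [hGamma, hlimit]
  exact tendsto_factorial_two_mul_div_prod_mul_prod_div_prod (by rw [hδ]; ring) hα hβ

/-- The connection coefficient as a limit of normalized Taylor coefficients:
`Γ(2n+1)Γ(δ-1)/Γ(2n-1+δ) · (α/2)_n(β/2)_n/(n!((γ+1)/2)_n)` converges to
`2·c⁺₁₂ = 2^(2-δ) Γ(δ-1) Γ((γ+1)/2)/(Γ(α/2)Γ(β/2))`, where `δ = (α+β+1-γ)/2`. -/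
theorem stmt19 (α β γ δ : ℂ) (hδ : δ = (α + β + 1 - γ) / 2) (hδ1 : δ.re < 1)
    (hγZ : ¬ ∃ m : ℤ, γ = (m : ℂ)) (hδZ : ¬ ∃ m : ℤ, δ = (m : ℂ))
    (hα : ∀ m : ℕ, α / 2 ≠ -(m : ℂ)) (hβ : ∀ m : ℕ, β / 2 ≠ -(m : ℂ)) :
    Tendsto (fun n : ℕ =>
        Complex.Gamma (2 * (n : ℂ) + 1) * Complex.Gamma (δ - 1) /
            Complex.Gamma (2 * (n : ℂ) - 1 + δ) *
          ((∏ i ∈ Finset.range n, (α / 2 + (i : ℂ))) *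
              (∏ i ∈ Finset.range n, (β / 2 + (i : ℂ))) /
            ((n ! : ℂ) * ∏ i ∈ Finset.range n, ((γ + 1) / 2 + (i : ℂ)))))
      atTop
      (nhds (2 * ((2 : ℂ) ^ ((1 : ℂ) - δ) * Complex.Gamma (δ - 1) *
        Complex.Gamma ((γ + 1) / 2) / (Complex.Gamma (α / 2) * Complex.Gamma (β / 2))))) :=
  stmt19_general α β γ δ hδ hδZ hα hβ
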